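/- arXiv:1708.04419 — 9 statements merged into one kernel-verified Lean document; each statement's English description precedes it below -/
import Mathlib

section
/- Let n, m, T be positive integers with T ≥ n, let A ∈ ℝ^{n×n} and B ∈ ℝ^{n×m} satisfy the controllability condition rank [B, AB, …, A^{n−1}B] = n, let Q ∈ ℝ^{n×n} be positive semi-definite and R ∈ ℝ^{m×m} positive definite. Suppose ν ≥ 0, p_t ∈ ℝⁿ (t = 0,…,T−1), x*_t ∈ ℝⁿ (t = 0,…,T) and u*_t ∈ ℝᵐ (t = 0,…,T−1) satisfy: x*_{t+1} = A x*_t + B u*_t for t = 0,…,T−1; the adjoint recursion p_{t−1} = Aᵀ p_t − ν Q x*_t for t = 1,…,T−1; the stationarity condition ν R u*_t = Bᵀ p_t for t = 0,…,T−1; and the non-triviality condition that ν and the vectors p_0,…,p_{T−1} do not simultaneously vanish. Then ν > 0; i.e., every optimal state-action trajectory of the fixed-endpoint linear-quadratic state-transfer problem is normal (no abnormal extremal lifts exist). -/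
/-!
If `ν = 0`, stationarity says `Bᵀ p_t = 0` and the adjoint recursion becomes `p_{t-1} = Aᵀ p_t`,
so `p_{T-1-k} = (Aᵀ)^k p_{T-1}` and `p_{T-1}ᵀ A^k B = 0` for all `k < T`. Since `T ≥ n`, the row
vector `p_{T-1}ᵀ` annihilates the Kalman matrix, whose rows are independent by controllability.
Hence `p_{T-1} = 0`, so every `p_t` vanishes, contradicting non-triviality.
-/

open Matrix

noncomputable section

/-- The controllability (Kalman) matrix `[B, AB, …, A^{n-1}B]`. -/
def kalmanMatrix (n m : ℕ) (A : Matrix (Fin n) (Fin n) ℝ)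
    (B : Matrix (Fin n) (Fin m) ℝ) : Matrix (Fin n) (Fin n × Fin m) ℝ :=
  fun i kj => (A ^ (kj.1 : ℕ) * B) i kj.2

namespace Matrix

variable {K ι κ : Type*} [Field K] [Fintype ι] [Fintype κ] {M : Matrix ι κ K}

theorem linearIndependent_row_of_rank_eq_card (h : M.rank = Fintype.card ι) :
    LinearIndependent K M.row := by
  rw [linearIndependent_iff_card_eq_finrank_span, Set.finrank, ← rank_eq_finrank_span_row, h]

theorem eq_zero_of_vecMul_eq_zero_of_rank_eq_card (h : M.rank = Fintype.card ι) {v : ι → K}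
    (hv : v ᵥ* M = 0) : v = 0 :=
  vecMul_injective_iff.mpr (linearIndependent_row_of_rank_eq_card h) (hv.trans (zero_vecMul M).symm)

end Matrix

theorem eq_pow_mulVec_of_backward_recursion {R ι : Type*} [CommSemiring R] [Fintype ι]
    [DecidableEq ι] (M : Matrix ι ι R) {p : ℕ → ι → R} {T : ℕ}
    (hp : ∀ t, 1 ≤ t → t < T → p (t - 1) = M *ᵥ p t) :
    ∀ s < T, p (T - 1 - s) = (M ^ s) *ᵥ p (T - 1)
  | 0, _ => by simp
  | s + 1, hs => by
    rw [show T - 1 - (s + 1) = T - 1 - s - 1 by omega, hp _ (by omega) (by omega),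
      eq_pow_mulVec_of_backward_recursion M hp s (by omega), mulVec_mulVec, pow_succ']

theorem eq_zero_of_vecMul_kalmanMatrix_eq_zero {n m : ℕ} {A : Matrix (Fin n) (Fin n) ℝ}
    {B : Matrix (Fin n) (Fin m) ℝ} (hctrb : (kalmanMatrix n m A B).rank = n) {q : Fin n → ℝ}
    (hq : ∀ k < n, q ᵥ* (A ^ k * B) = 0) : q = 0 := by
  refine eq_zero_of_vecMul_eq_zero_of_rank_eq_card (by simpa using hctrb) ?_
  funext ⟨k, j⟩
  exact congrFun (hq k k.isLt) j

theorem adjoint_eq_zero_of_abnormal {n m T : ℕ} (hTn : n ≤ T)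
    {A : Matrix (Fin n) (Fin n) ℝ} {B : Matrix (Fin n) (Fin m) ℝ}
    (hctrb : (kalmanMatrix n m A B).rank = n) {p : ℕ → Fin n → ℝ}
    (hadj : ∀ t, 1 ≤ t → t < T → p (t - 1) = Aᵀ *ᵥ p t)
    (hstat : ∀ t < T, Bᵀ *ᵥ p t = 0) :
    ∀ t < T, p t = 0 := by
  have hpow := eq_pow_mulVec_of_backward_recursion Aᵀ hadj
  have hlast : p (T - 1) = 0 := by
    refine eq_zero_of_vecMul_kalmanMatrix_eq_zero hctrb fun k hk => ?_
    have hBp := hstat (T - 1 - k) (by omega)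
    rwa [hpow k (by omega), ← transpose_pow, mulVec_mulVec, ← transpose_mul,
      mulVec_transpose] at hBp
  intro t ht
  simpa [show T - 1 - (T - 1 - t) = t by omega, hlast] using hpow (T - 1 - t) (by omega)

theorem stmt3_general
    (n m T : ℕ) (hTn : n ≤ T)
    (A : Matrix (Fin n) (Fin n) ℝ) (B : Matrix (Fin n) (Fin m) ℝ)
    (hctrb : (kalmanMatrix n m A B).rank = n)
    (Q : Matrix (Fin n) (Fin n) ℝ)
    (R : Matrix (Fin m) (Fin m) ℝ)
    (ν : ℝ) (hν : 0 ≤ ν)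
    (p xs : ℕ → Fin n → ℝ) (us : ℕ → Fin m → ℝ)
    (hadj : ∀ t, 1 ≤ t → t < T →
      p (t - 1) = Aᵀ.mulVec (p t) - ν • Q.mulVec (xs t))
    (hstat : ∀ t < T, ν • R.mulVec (us t) = Bᵀ.mulVec (p t))
    (hnontriv : ¬ (ν = 0 ∧ ∀ t < T, p t = 0)) :
    0 < ν := by
  refine hν.lt_of_ne fun hν0 => hnontriv ⟨hν0.symm, ?_⟩
  subst hν0
  refine adjoint_eq_zero_of_abnormal hTn hctrb (fun t h1 h2 => ?_) fun t ht => ?_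
  · simpa using hadj t h1 h2
  · simpa using (hstat t ht).symm

/-- Normality of the fixed-endpoint LQ state-transfer problem: every extremal
lift produced by the PMP has a strictly positive cost multiplier. -/
theorem stmt3
    (n m T : ℕ) (hn : 0 < n) (hm : 0 < m) (hT : 0 < T) (hTn : n ≤ T)
    (A : Matrix (Fin n) (Fin n) ℝ) (B : Matrix (Fin n) (Fin m) ℝ)
    (hctrb : (kalmanMatrix n m A B).rank = n)
    (Q : Matrix (Fin n) (Fin n) ℝ) (hQ : Q.PosSemidef)
    (R : Matrix (Fin m) (Fin m) ℝ) (hR : R.PosDef)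
    (ν : ℝ) (hν : 0 ≤ ν)
    (p xs : ℕ → Fin n → ℝ) (us : ℕ → Fin m → ℝ)
    (hdyn : ∀ t < T, xs (t + 1) = A.mulVec (xs t) + B.mulVec (us t))
    (hadj : ∀ t, 1 ≤ t → t < T →
      p (t - 1) = Aᵀ.mulVec (p t) - ν • Q.mulVec (xs t))
    (hstat : ∀ t < T, ν • R.mulVec (us t) = Bᵀ.mulVec (p t))
    (hnontriv : ¬ (ν = 0 ∧ ∀ t < T, p t = 0)) :
    0 < ν :=
  stmt3_general n m T hTn A B hctrb Q R ν hν p xs us hadj hstat hnontriv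
end
end

section
/- Let n, m, q, T be positive integers with T ≥ n, let A ∈ ℝ^{n×n} and B ∈ ℝ^{n×m} satisfy rank [B, AB, …, A^{n−1}B] = n, and let F_t ∈ ℝ^{q×m} for t = 0,…,T−1. If q + n > mT, then there exists a nonzero pair (p, μ) ∈ ℝⁿ × ℝ^q such that Bᵀ (Aᵀ)^{T−1−t} p = F_tᵀ μ for every t = 0,…,T−1. Consequently, setting ν = 0 and p_t := (Aᵀ)^{T−1−t} p, every feasible state-action trajectory of the frequency-constrained LQ state-transfer problem admits an abnormal extremal lift: the tuple (ν = 0, μ, (p_t)) is not identically zero and satisfies p_{t−1} = Aᵀ p_t for t = 1,…,T−1 and ν R u_t = Bᵀ p_t − F_tᵀ μ for t = 0,…,T−1. -/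
open Matrix

noncomputable section

/-- Abnormality of the frequency-constrained LQ state-transfer problem when
`q + n > mT`: there is a nonzero pair `(p, μ)` with
`Bᵀ (Aᵀ)^(T-1-t) p = Fₜᵀ μ` for all `t = 0, …, T-1`; consequently, with
`ν = 0` and `p_t := (Aᵀ)^(T-1-t) p`, one obtains a nontrivial abnormal
extremal lift satisfying the adjoint recursion and the stationarity
condition for any feasible control. -/
theorem stmt4
    (n m q T : ℕ) (hn : 0 < n) (hm : 0 < m) (hq : 0 < q) (hT : 0 < T) (hTn : n ≤ T)
    (A : Matrix (Fin n) (Fin n) ℝ) (B : Matrix (Fin n) (Fin m) ℝ)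
    (hctrb : (kalmanMatrix n m A B).rank = n)
    (F : ℕ → Matrix (Fin q) (Fin m) ℝ)
    (hcount : m * T < q + n)
    (R : Matrix (Fin m) (Fin m) ℝ) (u : ℕ → Fin m → ℝ) :
    ∃ (pv : Fin n → ℝ) (μ : Fin q → ℝ),
      ¬ (pv = 0 ∧ μ = 0) ∧
      (∀ t < T, Bᵀ.mulVec ((Aᵀ ^ (T - 1 - t)).mulVec pv) = (F t)ᵀ.mulVec μ) ∧
      -- Consequently, setting ν = 0 and pₜ := (Aᵀ)^(T-1-t) pv, the tuple
      -- (ν = 0, μ, (pₜ)) is an abnormal extremal lift: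
      (∀ t, 1 ≤ t → t < T →
        (Aᵀ ^ (T - 1 - (t - 1))).mulVec pv = Aᵀ.mulVec ((Aᵀ ^ (T - 1 - t)).mulVec pv)) ∧
      (∀ t < T, (0 : ℝ) • R.mulVec (u t) =
        Bᵀ.mulVec ((Aᵀ ^ (T - 1 - t)).mulVec pv) - (F t)ᵀ.mulVec μ) := by
  classical
  set L : ((Fin n → ℝ) × (Fin q → ℝ)) →ₗ[ℝ] (Fin T × Fin m → ℝ) :=
    { toFun := fun pm tj =>
        Bᵀ.mulVec ((Aᵀ ^ (T - 1 - (tj.1 : ℕ))).mulVec pm.1) tj.2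
          - (F tj.1)ᵀ.mulVec pm.2 tj.2
      map_add' := by
        intro x y
        funext tj
        simp [Matrix.mulVec_add]
        ring
      map_smul' := by
        intro c x
        funext tj
        simp [Matrix.mulVec_smul, smul_sub]
        ring } with hL
  have hker : ∃ x : (Fin n → ℝ) × (Fin q → ℝ), x ≠ 0 ∧ L x = 0 := by
    by_contra h
    push_neg at h
    have hinj : Function.Injective L := by
      rw [← LinearMap.ker_eq_bot]
      rw [Submodule.eq_bot_iff]
      intro x hx
      by_contra hx0
      exact (h x hx0) hx
    have := LinearMap.finrank_le_finrank_of_injective hinj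
    simp [Module.finrank_prod, Module.finrank_pi] at this
    rw [Nat.mul_comm] at this
    omega
  obtain ⟨⟨pv, μ⟩, hxne, hx0⟩ := hker
  refine ⟨pv, μ, ?_, ?_, ?_, ?_⟩
  · intro ⟨h1, h2⟩
    exact hxne (by simp [Prod.ext_iff, h1, h2])
  · intro t ht
    funext j
    have := congrFun hx0 (⟨t, ht⟩, j)
    simp [hL, ← Matrix.mulVec_mulVec] at this
    linarith [this]
  · intro t h1 h2
    have : T - 1 - (t - 1) = (T - 1 - t) + 1 := by omega
    rw [this, pow_succ', ← Matrix.mulVec_mulVec]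
  · intro t ht
    funext j
    have := congrFun hx0 (⟨t, ht⟩, j)
    simp [hL, ← Matrix.mulVec_mulVec] at this
    simp [Pi.sub_apply, ← Matrix.mulVec_mulVec]
    linarith [this]
end
end

section
/- Let K₁, …, K_s be closed convex cones in ℝᵈ with vertex at 0. If the convex hull of their union, convexHull( ⋃_{i=1}^{s} K_i ), is not closed, then there exist vectors λ₁ ∈ K₁, …, λ_s ∈ K_s, not all of them zero, such that λ₁ + ⋯ + λ_s = 0. -/
open scoped RealInnerProductSpace
open Asymptotics Topology

noncomputable section

abbrev Euc (d : ℕ) : Type := EuclideanSpace ℝ (Fin d)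

/-- `K` is a convex cone with vertex `a`. -/
def IsConvexCone {E : Type*} [NormedAddCommGroup E] [InnerProductSpace ℝ E]
    (a : E) (K : Set E) : Prop :=
  a ∈ K ∧ (∀ x ∈ K, ∀ α : ℝ, 0 ≤ α → a + α • (x - a) ∈ K) ∧ Convex ℝ K

/-- The polar (dual) cone of a cone `K` with vertex `a`. -/
def polarCone {E : Type*} [NormedAddCommGroup E] [InnerProductSpace ℝ E]
    (a : E) (K : Set E) : Set E :=
  {y | ∀ x ∈ K, ⟪y, x - a⟫ ≤ 0}

/-- `Q` is a tent of `Ω` at `a`. -/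
def IsTent {E : Type*} [NormedAddCommGroup E] [InnerProductSpace ℝ E]
    (Ω : Set E) (a : E) (Q : Set E) : Prop :=
  IsConvexCone a Q ∧
  ∃ ψ : E → E, (fun x => ψ x - x) =o[𝓝 a] (fun x => x - a) ∧
    ∃ ε : ℝ, 0 < ε ∧ ∀ x ∈ Q, ‖x - a‖ < ε → ψ x ∈ Ω

/-- `Q` is a local tent of `Ω` at `a`. -/
def IsLocalTent {E : Type*} [NormedAddCommGroup E] [InnerProductSpace ℝ E]
    (Ω : Set E) (a : E) (Q : Set E) : Prop :=
  IsConvexCone a Q ∧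
  ∀ x ∈ intrinsicInterior ℝ Q, ∃ Q' : Set E, Q' ⊆ Q ∧ IsTent Ω a Q' ∧
    x ∈ intrinsicInterior ℝ Q' ∧ affineSpan ℝ Q' = affineSpan ℝ Q

/-- A family of convex cones with common vertex `a` is separable. -/
def SeparableFam {E : Type*} [NormedAddCommGroup E] [InnerProductSpace ℝ E]
    {ι : Type*} (a : E) (K : ι → Set E) : Prop :=
  ∃ (i : ι) (c : E), c ≠ 0 ∧ (∀ x ∈ K i, ⟪c, x - a⟫ ≤ 0) ∧
    ∀ x : E, (∀ j, j ≠ i → x ∈ K j) → 0 ≤ ⟪c, x - a⟫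

section Aux

variable {d s : ℕ}

lemma cone_smul_mem {K : Set (Euc d)} (h : IsConvexCone (0 : Euc d) K)
    {x : Euc d} (hx : x ∈ K) {α : ℝ} (hα : 0 ≤ α) : α • x ∈ K := by
  have := h.2.1 x hx α hα
  simpa using this

lemma hull_eq_sumSet (hs : 0 < s) (K : Fin s → Set (Euc d))
    (hK : ∀ i, IsConvexCone (0 : Euc d) (K i)) :
    convexHull ℝ (⋃ i, K i)
      = {x | ∃ lam : Fin s → Euc d, (∀ i, lam i ∈ K i) ∧ ∑ i, lam i = x} := by
  apply Set.Subset.antisymm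
  · apply convexHull_min
    · intro x hx
      obtain ⟨i, hi⟩ := Set.mem_iUnion.1 hx
      refine ⟨Pi.single i x, ?_, ?_⟩
      · intro j
        by_cases hji : j = i
        · subst hji; simpa using hi
        · simpa [Pi.single_eq_of_ne hji] using (hK j).1
      · simp
    · rintro x ⟨lam, hlam, rfl⟩ y ⟨mu, hmu, rfl⟩ a b ha hb hab
      refine ⟨fun i => a • lam i + b • mu i,
        fun i => (hK i).2.2 (hlam i) (hmu i) ha hb hab, ?_⟩
      simp [Finset.sum_add_distrib, Finset.smul_sum]
  · rintro x ⟨lam, hlam, rfl⟩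
    have hsne : (s : ℝ) ≠ 0 := Nat.cast_ne_zero.2 hs.ne'
    have hre : ∑ i, lam i = ∑ i, ((s:ℝ)⁻¹) • ((s:ℝ) • lam i) := by
      simp [smul_smul, inv_mul_cancel₀ hsne]
    rw [hre]
    refine (convex_convexHull ℝ _).sum_mem (fun i _ => by positivity) ?_ (fun i _ => ?_)
    · rw [Finset.sum_const, Finset.card_univ, Fintype.card_fin, nsmul_eq_mul,
        mul_inv_cancel₀ hsne]
    · exact subset_convexHull ℝ _
        (Set.mem_iUnion.2 ⟨i, cone_smul_mem (hK i) (hlam i) (by positivity)⟩)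

end Aux

theorem stmt10' (d s : ℕ) (hs : 0 < s) (K : Fin s → Set (Euc d))
    (hK : ∀ i, IsConvexCone (0 : Euc d) (K i)) (hKcl : ∀ i, IsClosed (K i))
    (hnc : ¬ IsClosed (convexHull ℝ (⋃ i, K i))) :
    ∃ lam : Fin s → Euc d, (∀ i, lam i ∈ K i) ∧ (∃ i, lam i ≠ 0) ∧
      ∑ i, lam i = 0 := by
  by_contra hcon
  push_neg at hcon
  have hzero : ∀ lam : Fin s → Euc d, (∀ i, lam i ∈ K i) → ∑ i, lam i = 0 →
      ∀ i, lam i = 0 := by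
    intro lam h1 h2 i
    by_contra hne
    exact hcon lam h1 ⟨i, hne⟩ h2
  rw [hull_eq_sumSet hs K hK] at hnc
  apply hnc
  set P : Set (Fin s → Euc d) := Set.univ.pi K with hP
  have hPmem : ∀ lam : Fin s → Euc d, lam ∈ P ↔ ∀ i, lam i ∈ K i := by
    intro lam; rw [hP]; exact Set.mem_univ_pi
  have hPclosed : IsClosed P := isClosed_set_pi (fun i _ => hKcl i)
  have hNcont : Continuous fun lam : Fin s → Euc d => ∑ i, ‖lam i‖ :=
    continuous_finset_sum _ fun i _ => (continuous_apply i).norm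
  have hgcont : Continuous fun lam : Fin s → Euc d => ‖∑ i, lam i‖ :=
    (continuous_finset_sum _ fun i _ => continuous_apply i).norm
  -- key coercivity inequality
  have key : ∃ c : ℝ, 0 < c ∧ ∀ lam : Fin s → Euc d, (∀ i, lam i ∈ K i) →
      c * ∑ i, ‖lam i‖ ≤ ‖∑ i, lam i‖ := by
    set T : Set (Fin s → Euc d) := P ∩ {lam | ∑ i, ‖lam i‖ = 1} with hT
    have hTmem : ∀ lam : Fin s → Euc d, lam ∈ T ↔ (∀ i, lam i ∈ K i) ∧ ∑ i, ‖lam i‖ = 1 := by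
      intro lam
      simp only [hT, Set.mem_inter_iff, Set.mem_setOf_eq, hPmem]
    have hscale : ∀ lam : Fin s → Euc d, (∀ i, lam i ∈ K i) → (∑ i, ‖lam i‖) ≠ 0 →
        ((∑ i, ‖lam i‖)⁻¹ • lam) ∈ T := by
      intro lam hlam hN
      have hNpos : 0 < ∑ i, ‖lam i‖ :=
        lt_of_le_of_ne (Finset.sum_nonneg fun i _ => norm_nonneg _) (Ne.symm hN)
      rw [hTmem]
      constructor
      · intro i
        exact cone_smul_mem (hK i) (hlam i) (inv_nonneg.2 hNpos.le)
      · have : ∀ i, ‖((∑ j, ‖lam j‖)⁻¹ • lam) i‖ = (∑ j, ‖lam j‖)⁻¹ * ‖lam i‖ := by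
          intro i
          rw [Pi.smul_apply, norm_smul, Real.norm_eq_abs,
            abs_of_nonneg (inv_nonneg.2 hNpos.le)]
        rw [Finset.sum_congr rfl fun i _ => this i, ← Finset.mul_sum,
          inv_mul_cancel₀ hN]
    rcases Set.eq_empty_or_nonempty T with hTe | hTne
    · refine ⟨1, one_pos, fun lam hlam => ?_⟩
      have hN0 : (∑ i, ‖lam i‖) = 0 := by
        by_contra hN
        have := hscale lam hlam hN
        rw [hTe] at this
        exact this
      have hall : ∀ i, lam i = 0 := by
        intro i
        have := (Finset.sum_eq_zero_iff_of_nonneg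
          (fun j _ => norm_nonneg (lam j))).1 hN0 i (Finset.mem_univ i)
        simpa using this
      simp [hN0, Finset.sum_congr rfl fun i _ => hall i]
    · have hTsub : T ⊆ Metric.closedBall 0 1 := by
        intro lam hlam
        rw [hTmem] at hlam
        rw [Metric.mem_closedBall, dist_zero_right]
        refine pi_norm_le_iff_of_nonneg zero_le_one |>.2 fun i => ?_
        calc ‖lam i‖ ≤ ∑ j, ‖lam j‖ :=
              Finset.single_le_sum (fun j _ => norm_nonneg _) (Finset.mem_univ i)
          _ = 1 := hlam.2
      have hTclosed : IsClosed T := hPclosed.inter (isClosed_eq hNcont continuous_const)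
      have hTcompact : IsCompact T :=
        (isCompact_closedBall (0 : Fin s → Euc d) 1).of_isClosed_subset hTclosed hTsub
      obtain ⟨lam₀, hlam₀T, hmin⟩ :=
        hTcompact.exists_isMinOn hTne hgcont.continuousOn
      rw [hTmem] at hlam₀T
      set c := ‖∑ i, lam₀ i‖ with hc
      have hcpos : 0 < c := by
        rcases (norm_nonneg (∑ i, lam₀ i)).lt_or_eq with h | h
        · exact h
        · exfalso
          have hsum0 : ∑ i, lam₀ i = 0 := by
            rw [← norm_eq_zero]; exact h.symm
          have := hzero lam₀ hlam₀T.1 hsum0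
          have h1 := hlam₀T.2
          rw [Finset.sum_congr rfl fun i _ => by rw [this i, norm_zero]] at h1
          simpa using h1
      refine ⟨c, hcpos, fun lam hlam => ?_⟩
      by_cases hN : (∑ i, ‖lam i‖) = 0
      · have hall : ∀ i, lam i = 0 := by
          intro i
          have := (Finset.sum_eq_zero_iff_of_nonneg
            (fun j _ => norm_nonneg (lam j))).1 hN i (Finset.mem_univ i)
          simpa using this
        simp [hN, Finset.sum_congr rfl fun i _ => hall i]
      · have hNpos : 0 < ∑ i, ‖lam i‖ :=
          lt_of_le_of_ne (Finset.sum_nonneg fun i _ => norm_nonneg _) (Ne.symm hN)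
        have hmem := hscale lam hlam hN
        have hle := hmin hmem
        have heq : ‖∑ i, ((∑ j, ‖lam j‖)⁻¹ • lam) i‖
            = (∑ j, ‖lam j‖)⁻¹ * ‖∑ i, lam i‖ := by
          simp only [Pi.smul_apply, ← Finset.smul_sum]
          rw [norm_smul, Real.norm_eq_abs, abs_of_nonneg (inv_nonneg.2 hNpos.le)]
        simp only [Set.mem_setOf_eq] at hle
        rw [heq] at hle
        calc c * ∑ i, ‖lam i‖
            ≤ ((∑ j, ‖lam j‖)⁻¹ * ‖∑ i, lam i‖) * ∑ i, ‖lam i‖ := by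
              exact mul_le_mul_of_nonneg_right hle hNpos.le
          _ = ‖∑ i, lam i‖ := by field_simp
  obtain ⟨c, hcpos, hkey⟩ := key
  apply IsSeqClosed.isClosed
  intro u x hu hux
  choose lam hlamK hlamsum using hu
  obtain ⟨R, hR⟩ : ∃ R : ℝ, ∀ n, ‖u n‖ ≤ R := by
    have := hux.norm.bddAbove_range
    obtain ⟨R, hR⟩ := this
    exact ⟨R, fun n => hR ⟨n, rfl⟩⟩
  have hR0 : 0 ≤ R := le_trans (norm_nonneg (u 0)) (hR 0)
  have hbound : ∀ n, ‖lam n‖ ≤ c⁻¹ * R := by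
    intro n
    have h1 : c * ∑ i, ‖lam n i‖ ≤ ‖∑ i, lam n i‖ := hkey (lam n) (hlamK n)
    rw [hlamsum n] at h1
    have h2 : ∑ i, ‖lam n i‖ ≤ c⁻¹ * R := by
      have h3 : c * ∑ i, ‖lam n i‖ ≤ R := h1.trans (hR n)
      calc ∑ i, ‖lam n i‖ = c⁻¹ * (c * ∑ i, ‖lam n i‖) := by
            rw [inv_mul_cancel_left₀ hcpos.ne']
        _ ≤ c⁻¹ * R := mul_le_mul_of_nonneg_left h3 (inv_nonneg.2 hcpos.le)
    refine pi_norm_le_iff_of_nonneg (by positivity) |>.2 fun i => ?_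
    calc ‖lam n i‖ ≤ ∑ j, ‖lam n j‖ :=
          Finset.single_le_sum (fun j _ => norm_nonneg _) (Finset.mem_univ i)
      _ ≤ c⁻¹ * R := h2
  set Cs : Set (Fin s → Euc d) := P ∩ Metric.closedBall 0 (c⁻¹ * R) with hCs
  have hCscompact : IsCompact Cs :=
    (isCompact_closedBall (0 : Fin s → Euc d) (c⁻¹ * R)).of_isClosed_subset
      (hPclosed.inter Metric.isClosed_closedBall) Set.inter_subset_right
  have hmemCs : ∀ n, lam n ∈ Cs := by
    intro n
    exact ⟨(hPmem (lam n)).2 (hlamK n), by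
      rw [Metric.mem_closedBall, dist_zero_right]; exact hbound n⟩
  obtain ⟨L, hL, φ, hφ, hLt⟩ := hCscompact.tendsto_subseq hmemCs
  refine ⟨L, (hPmem L).1 hL.1, ?_⟩
  have h1 : Filter.Tendsto (fun n => ∑ i, lam (φ n) i) Filter.atTop
      (𝓝 (∑ i, L i)) :=
    ((continuous_finset_sum _ fun i _ => continuous_apply i).tendsto L).comp hLt
  have h2 : Filter.Tendsto (fun n => u (φ n)) Filter.atTop (𝓝 x) :=
    hux.comp hφ.tendsto_atTop
  have h3 : (fun n => ∑ i, lam (φ n) i) = fun n => u (φ n) := by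
    funext n; exact hlamsum (φ n)
  rw [h3] at h1
  exact tendsto_nhds_unique h1 h2

/-- If the convex hull of the union of finitely many closed convex cones with
vertex `0` is not closed, then there are vectors `λᵢ ∈ Kᵢ`, not all zero,
summing to zero. -/
theorem stmt10 (d s : ℕ) (hs : 0 < s) (K : Fin s → Set (Euc d))
    (hK : ∀ i, IsConvexCone (0 : Euc d) (K i)) (hKcl : ∀ i, IsClosed (K i))
    (hnc : ¬ IsClosed (convexHull ℝ (⋃ i, K i))) :
    ∃ lam : Fin s → Euc d, (∀ i, lam i ∈ K i) ∧ (∃ i, lam i ≠ 0) ∧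
      ∑ i, lam i = 0 :=
  stmt10' d s hs K hK hKcl hnc
end
end

section
/- Let K₁, …, K_s be convex cones in ℝᵈ with a common vertex a. If the family {K₁, …, K_s} is not separable, then ⋂_{i=1}^{s} relint K_i ≠ ∅. -/
open scoped RealInnerProductSpace
open Asymptotics Topology

noncomputable section

/-! Induct on the number of sets. By induction the relative interiors of `K₁, …, K_s` have a
common point; if their intersection misses `relint K₀`, the two disjoint convex sets are separated
by a hyperplane (in finite dimension no closedness is needed). Each convex set lies in the closure
of its relative interior, so the hyperplane also separates `K₀` from `⋂ Kⱼ`, and since `a` lies in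
both it passes through `a`. -/

open Set

section IntrinsicInterior

variable {E : Type*} [NormedAddCommGroup E] [NormedSpace ℝ E] {s : Set E} {x y z : E}

theorem mem_intrinsicInterior_iff_ball_inter_affineSpan_subset :
    z ∈ intrinsicInterior ℝ s ↔
      z ∈ affineSpan ℝ s ∧ ∃ ε > 0, Metric.ball z ε ∩ affineSpan ℝ s ⊆ s := by
  rw [mem_intrinsicInterior]
  constructor
  · rintro ⟨z, hz, rfl⟩
    obtain ⟨ε, hε, hball⟩ := Metric.isOpen_iff.1 isOpen_interior z hz
    refine ⟨z.2, ε, hε, fun u ⟨hu, huA⟩ => ?_⟩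
    have hu' : (⟨u, huA⟩ : affineSpan ℝ s) ∈ interior ((↑) ⁻¹' s) := hball hu
    exact interior_subset (s := ((↑) ⁻¹' s : Set (affineSpan ℝ s))) hu'
  · rintro ⟨hzA, ε, hε, hball⟩
    refine ⟨⟨z, hzA⟩, mem_interior.2 ⟨Metric.ball ⟨z, hzA⟩ ε, ?_, Metric.isOpen_ball,
      Metric.mem_ball_self hε⟩, rfl⟩
    exact fun u hu => hball ⟨hu, u.2⟩

theorem Convex.openSegment_intrinsicInterior_self_subset_intrinsicInterior (hs : Convex ℝ s)
    (hx : x ∈ intrinsicInterior ℝ s) (hy : y ∈ s) :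
    openSegment ℝ x y ⊆ intrinsicInterior ℝ s := by
  rintro z ⟨a, b, ha, hb, hab, rfl⟩
  obtain ⟨hxA, ε, hε, hball⟩ := mem_intrinsicInterior_iff_ball_inter_affineSpan_subset.1 hx
  have hyA : y ∈ affineSpan ℝ s := subset_affineSpan ℝ s hy
  have hzA : a • x + b • y ∈ affineSpan ℝ s := (affineSpan ℝ s).convex hxA hyA ha.le hb.le hab
  refine mem_intrinsicInterior_iff_ball_inter_affineSpan_subset.2
    ⟨hzA, a * ε, by positivity, fun u ⟨hu, huA⟩ => ?_⟩
  -- `u` is the image under the homothety of ratio `a` centred at `y` of a point `w` near `x`.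
  set w := a⁻¹ • (u - (a • x + b • y)) + x
  have hwA : w ∈ affineSpan ℝ s := AffineSubspace.vadd_mem_of_mem_direction
    (Submodule.smul_mem _ _ (AffineSubspace.vsub_mem_direction huA hzA)) hxA
  have hwx : dist w x < ε := by
    rw [Metric.mem_ball, dist_eq_norm] at hu
    rw [dist_eq_norm, add_sub_cancel_right, norm_smul, norm_inv, Real.norm_of_nonneg ha.le,
      inv_mul_lt_iff₀ ha]
    exact hu
  have hu_eq : u = a • w + b • y := by
    simp only [w, smul_add, smul_smul, mul_inv_cancel₀ ha.ne', one_smul]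
    abel
  rw [hu_eq]
  exact hs (hball ⟨hwx, hwA⟩) hy ha.le hb.le hab

protected theorem Convex.intrinsicInterior (hs : Convex ℝ s) :
    Convex ℝ (intrinsicInterior ℝ s) :=
  convex_iff_openSegment_subset.2 fun _ hx _ hy =>
    hs.openSegment_intrinsicInterior_self_subset_intrinsicInterior hx
      (intrinsicInterior_subset hy)

theorem Convex.subset_closure_intrinsicInterior (hs : Convex ℝ s)
    (hne : (intrinsicInterior ℝ s).Nonempty) : s ⊆ closure (intrinsicInterior ℝ s) := by
  obtain ⟨z, hz⟩ := hne
  exact fun x hx =>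
    closure_mono (hs.openSegment_intrinsicInterior_self_subset_intrinsicInterior hz hx)
      (segment_subset_closure_openSegment (right_mem_segment ℝ z x))

theorem iInter_subset_closure_iInter_intrinsicInterior {ι : Type*} {K : ι → Set E}
    (hK : ∀ i, Convex ℝ (K i)) (hne : (⋂ i, intrinsicInterior ℝ (K i)).Nonempty) :
    ⋂ i, K i ⊆ closure (⋂ i, intrinsicInterior ℝ (K i)) := by
  obtain ⟨z, hz⟩ := hne
  intro x hx
  rw [mem_iInter] at hz hx
  exact closure_mono (subset_iInter fun i =>
      (hK i).openSegment_intrinsicInterior_self_subset_intrinsicInterior (hz i) (hx i))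
    (segment_subset_closure_openSegment (right_mem_segment ℝ z x))

end IntrinsicInterior

section Separation

open scoped Pointwise

variable {E : Type*} [NormedAddCommGroup E] [InnerProductSpace ℝ E] [FiniteDimensional ℝ E]

theorem exists_ne_zero_forall_inner_eq_of_interior_eq_empty {S : Set E} (hS : Convex ℝ S)
    (hint : interior S = ∅) {p : E} (hp : p ∈ S) :
    ∃ c ≠ 0, ∀ x ∈ S, ⟪c, x⟫ = ⟪c, p⟫ := by
  have hdir : (affineSpan ℝ S).direction ≠ ⊤ := by
    rw [Ne, AffineSubspace.direction_eq_top_iff_of_nonempty ⟨p, subset_affineSpan ℝ S hp⟩,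
      ← hS.interior_nonempty_iff_affineSpan_eq_top, hint]
    exact not_nonempty_empty
  obtain ⟨c, hc, hc0⟩ :=
    Submodule.exists_mem_ne_zero_of_ne_bot ((Submodule.orthogonal_eq_bot_iff).not.2 hdir)
  refine ⟨c, hc0, fun x hx => ?_⟩
  have := Submodule.inner_left_of_mem_orthogonal
    (AffineSubspace.vsub_mem_direction (subset_affineSpan ℝ S hx) (subset_affineSpan ℝ S hp)) hc
  rwa [vsub_eq_sub, inner_sub_right, sub_eq_zero] at this

theorem exists_ne_zero_forall_inner_nonneg_of_zero_notMem {S : Set E} (hS : Convex ℝ S)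
    (hne : S.Nonempty) (h0 : (0 : E) ∉ S) : ∃ c ≠ 0, ∀ x ∈ S, 0 ≤ ⟪c, x⟫ := by
  -- Either `S` lies in a hyperplane, or it has interior points and Hahn–Banach applies.
  rcases (interior S).eq_empty_or_nonempty with hint | hint
  · obtain ⟨p, hp⟩ := hne
    obtain ⟨c, hc0, hc⟩ := exists_ne_zero_forall_inner_eq_of_interior_eq_empty hS hint hp
    rcases le_total 0 ⟪c, p⟫ with hcp | hcp
    · exact ⟨c, hc0, fun x hx => (hc x hx).symm ▸ hcp⟩
    · refine ⟨-c, neg_ne_zero.2 hc0, fun x hx => ?_⟩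
      rw [inner_neg_left, hc x hx]
      linarith
  · obtain ⟨f, hf0, hf⟩ := geometric_hahn_banach_of_nonempty_interior_point hS
      (fun h => h0 (interior_subset h)) hint
    refine ⟨-(InnerProductSpace.toDual ℝ E).symm f, by simpa using hf0, fun x hx => ?_⟩
    simpa [inner_neg_left, InnerProductSpace.toDual_symm_apply] using hf x hx

theorem exists_ne_zero_forall_inner_le_inner_of_disjoint {C D : Set E} (hC : Convex ℝ C)
    (hD : Convex ℝ D) (hCne : C.Nonempty) (hDne : D.Nonempty) (hCD : Disjoint C D) :
    ∃ c ≠ 0, ∀ x ∈ C, ∀ y ∈ D, ⟪c, x⟫ ≤ ⟪c, y⟫ := by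
  have h0 : (0 : E) ∉ D - C := by
    rintro ⟨y, hy, x, hx, hyx⟩
    exact hCD.ne_of_mem hx hy (sub_eq_zero.1 hyx).symm
  obtain ⟨c, hc0, hc⟩ := exists_ne_zero_forall_inner_nonneg_of_zero_notMem (hD.sub hC)
    (hDne.sub hCne) h0
  refine ⟨c, hc0, fun x hx y hy => ?_⟩
  have := hc (y - x) (sub_mem_sub hy hx)
  rw [inner_sub_right] at this
  linarith

theorem exists_separating_hyperplane_of_disjoint_intrinsicInterior {ι : Type*} {Q : Set E}
    {L : ι → Set E} {a : E} (haQ : a ∈ Q) (haL : ∀ j, a ∈ L j) (hQ : Convex ℝ Q)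
    (hL : ∀ j, Convex ℝ (L j)) (hLne : (⋂ j, intrinsicInterior ℝ (L j)).Nonempty)
    (hdisj : Disjoint (intrinsicInterior ℝ Q) (⋂ j, intrinsicInterior ℝ (L j))) :
    ∃ c ≠ 0, (∀ x ∈ Q, ⟪c, x - a⟫ ≤ 0) ∧ ∀ y ∈ ⋂ j, L j, 0 ≤ ⟪c, y - a⟫ := by
  have hQne : (intrinsicInterior ℝ Q).Nonempty := Set.Nonempty.intrinsicInterior hQ ⟨a, haQ⟩
  obtain ⟨c, hc0, hc⟩ := exists_ne_zero_forall_inner_le_inner_of_disjoint hQ.intrinsicInterior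
    (convex_iInter fun j => (hL j).intrinsicInterior) hQne hLne hdisj
  have hcl : ∀ x ∈ Q, ∀ y ∈ ⋂ j, L j, ⟪c, x⟫ ≤ ⟪c, y⟫ := by
    have hclosed : IsClosed {p : E × E | ⟪c, p.1⟫ ≤ ⟪c, p.2⟫} :=
      isClosed_le (continuous_const.inner continuous_fst) (continuous_const.inner continuous_snd)
    intro x hx y hy
    have hxy :
        (x, y) ∈ closure (intrinsicInterior ℝ Q ×ˢ ⋂ j, intrinsicInterior ℝ (L j)) := by
      rw [closure_prod_eq]
      exact ⟨hQ.subset_closure_intrinsicInterior hQne hx,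
        iInter_subset_closure_iInter_intrinsicInterior hL hLne hy⟩
    exact hclosed.closure_subset_iff.2 (fun p hp => hc _ hp.1 _ hp.2) hxy
  have haL' : a ∈ ⋂ j, L j := mem_iInter.2 haL
  refine ⟨c, hc0, fun x hx => ?_, fun y hy => ?_⟩
  · rw [inner_sub_right]
    linarith [hcl x hx a haL']
  · rw [inner_sub_right]
    linarith [hcl a haQ y hy]

end Separation

section SeparableFam

variable {E : Type*} [NormedAddCommGroup E] [InnerProductSpace ℝ E] {a : E}

theorem SeparableFam.of_comp {ι ι' : Type*} {K : ι → Set E} {e : ι' → ι}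
    (he : Function.Injective e) (h : SeparableFam a (K ∘ e)) : SeparableFam a K := by
  obtain ⟨i, c, hc0, hi, hrest⟩ := h
  exact ⟨e i, c, hc0, hi, fun x hx => hrest x fun j hj => hx (e j) (he.ne hj)⟩

theorem nonempty_iInter_intrinsicInterior_of_not_separableFam [FiniteDimensional ℝ E] {n : ℕ}
    {K : Fin n → Set E} (ha : ∀ i, a ∈ K i) (hK : ∀ i, Convex ℝ (K i))
    (hns : ¬ SeparableFam a K) :
    (⋂ i, intrinsicInterior ℝ (K i)).Nonempty := by
  induction n with
  | zero => simp
  | succ n ih =>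
    have hD : (⋂ j : Fin n, intrinsicInterior ℝ (K j.succ)).Nonempty :=
      ih (fun j => ha j.succ) (fun j => hK j.succ) fun h => hns (h.of_comp (Fin.succ_injective n))
    by_cases hdisj :
        Disjoint (intrinsicInterior ℝ (K 0)) (⋂ j : Fin n, intrinsicInterior ℝ (K j.succ))
    · obtain ⟨c, hc0, h0, hsucc⟩ := exists_separating_hyperplane_of_disjoint_intrinsicInterior
        (L := fun j : Fin n => K j.succ) (ha 0) (fun j => ha j.succ) (hK 0)
        (fun j => hK j.succ) hD hdisj
      exact (hns ⟨0, c, hc0, h0, fun x hx =>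
        hsucc x (mem_iInter.2 fun j => hx j.succ (Fin.succ_ne_zero j))⟩).elim
    · obtain ⟨x, hx0, hxsucc⟩ := not_disjoint_iff.1 hdisj
      exact ⟨x, mem_iInter.2 (Fin.cases hx0 (mem_iInter.1 hxsucc))⟩

end SeparableFam

theorem stmt11_general (d s : ℕ) (a : Euc d) (K : Fin s → Set (Euc d))
    (hK : ∀ i, IsConvexCone a (K i)) (hns : ¬ SeparableFam a K) :
    (⋂ i, intrinsicInterior ℝ (K i)).Nonempty :=
  nonempty_iInter_intrinsicInterior_of_not_separableFam (fun i => (hK i).1)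
    (fun i => (hK i).2.2) hns

/-- If a family of convex cones with a common vertex is not separable, then
their relative interiors have a common point. -/
theorem stmt11 (d s : ℕ) (hs : 0 < s) (a : Euc d) (K : Fin s → Set (Euc d))
    (hK : ∀ i, IsConvexCone a (K i)) (hns : ¬ SeparableFam a K) :
    (⋂ i, intrinsicInterior ℝ (K i)).Nonempty :=
  stmt11_general d s a K hK hns
end
end

section
/- Let s ∈ ℕ and let {K₀, K₁, …, K_s} be a family of convex cones in ℝᵈ with a common vertex a. The family is separable if and only if there exist vectors λ_i ∈ K_i° for i = 0, …, s, not all zero, satisfying λ₀ + λ₁ + ⋯ + λ_s = 0. -/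
open scoped RealInnerProductSpace
open Asymptotics Topology

noncomputable section

/-!
The shifts `y ∈ Eᶥ` for which the translates `K i - y i` have a common point form a convex cone
`S`. If `c` separates `K i` from the other cones, then the shift by `c` at coordinate `i` is not
in `S`. A dense convex set in finite dimensions is the whole space, so `S` lies in a half-space
`{y | ⟪μ, y⟫ ≤ 0}` with `μ ≠ 0`. Testing against shifts supported on one coordinate gives
`μ i ∈ (K i)°`, and testing against the diagonal gives `∑ i, μ i = 0`. Conversely, a nonzero
`λ i` itself separates `K i` from the other cones.
-/

theorem Convex.eq_univ_of_dense {V : Type*} [NormedAddCommGroup V] [NormedSpace ℝ V]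
    [FiniteDimensional ℝ V] {s : Set V} (hs : Convex ℝ s) (hd : Dense s) : s = Set.univ := by
  have hspan : affineSpan ℝ s = ⊤ := by
    refine eq_top_iff.mpr fun p _ => ?_
    exact (affineSpan ℝ s).closed_of_finiteDimensional.closure_subset_iff.mpr
      (subset_affineSpan ℝ s) (hd p)
  have hint := hs.interior_closure_eq_interior_of_nonempty_interior
    (hs.interior_nonempty_iff_affineSpan_eq_top.mpr hspan)
  rw [hd.closure_eq, interior_univ] at hint
  exact Set.univ_subset_iff.mp (hint ▸ interior_subset)

theorem PointedCone.exists_ne_zero_inner_nonpos_of_ne_top {H : Type*} [NormedAddCommGroup H]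
    [InnerProductSpace ℝ H] [FiniteDimensional ℝ H] {C : PointedCone ℝ H} (hC : C ≠ ⊤) :
    ∃ y ≠ 0, ∀ x ∈ C, ⟪y, x⟫ ≤ 0 := by
  obtain ⟨x₀, hx₀⟩ : ∃ x₀, x₀ ∉ closure (C : Set H) := by
    by_contra! h
    exact hC (SetLike.coe_injective (C.convex.eq_univ_of_dense fun x => h x))
  obtain ⟨y, hy, hyx₀⟩ :=
    ProperCone.hyperplane_separation' (C := Submodule.closure C) (x₀ := x₀) hx₀
  refine ⟨-y, fun h => by simp [neg_eq_zero.mp h] at hyx₀, fun x hx => ?_⟩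
  simpa [real_inner_comm] using hy x (subset_closure hx)

section Shifts

variable {E : Type*} [NormedAddCommGroup E] [InnerProductSpace ℝ E] {a : E}

theorem IsConvexCone.add_sub_mem {K : Set E} (hK : IsConvexCone a K) {x y : E} (hx : x ∈ K)
    (hy : y ∈ K) : x + y - a ∈ K := by
  have hmid : (1 / 2 : ℝ) • x + (1 / 2 : ℝ) • y ∈ K := hK.2.2 hx hy (by norm_num) (by norm_num)
    (by norm_num)
  convert hK.2.1 _ hmid 2 (by norm_num) using 1
  module

variable {ι : Type*} {K : ι → Set E}

/-- The Minkowski sum of `∏ i, (K i - a)` and the diagonal of `Eᶥ`. -/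
def intersectingShifts (hK : ∀ i, IsConvexCone a (K i)) : PointedCone ℝ (PiLp 2 fun _ : ι => E)
    where
  carrier := {y | ∃ x, ∀ i, x + y i ∈ K i}
  zero_mem' := ⟨a, fun i => by simpa using (hK i).1⟩
  add_mem' := by
    rintro y y' ⟨x, hx⟩ ⟨x', hx'⟩
    refine ⟨x + x' - a, fun i => ?_⟩
    convert (hK i).add_sub_mem (hx i) (hx' i) using 1
    simp only [PiLp.add_apply]
    abel
  smul_mem' := by
    rintro c y ⟨x, hx⟩
    refine ⟨a + (c : ℝ) • (x - a), fun i => ?_⟩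
    convert (hK i).2.1 _ (hx i) c c.2 using 1
    rw [PiLp.smul_apply, ← Nonneg.coe_smul]
    module

theorem exists_mem_polarCone_of_intersectingShifts_ne_top [Fintype ι] [DecidableEq ι]
    [FiniteDimensional ℝ E] (hK : ∀ i, IsConvexCone a (K i)) (h : intersectingShifts hK ≠ ⊤) :
    ∃ lam : ι → E, (∀ i, lam i ∈ polarCone a (K i)) ∧ (∃ i, lam i ≠ 0) ∧ ∑ i, lam i = 0 := by
  obtain ⟨μ, hμ0, hμ⟩ := PointedCone.exists_ne_zero_inner_nonpos_of_ne_top h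
  refine ⟨fun i => μ i, fun i z hz => ?_, ?_, ?_⟩
  · have hmem : PiLp.single 2 i (z - a) ∈ intersectingShifts hK := by
      refine ⟨a, fun j => ?_⟩
      rcases eq_or_ne j i with rfl | hji
      · simpa using hz
      · simpa [hji] using (hK j).1
    simpa [PiLp.inner_apply, Pi.single_apply, apply_ite (inner ℝ _)] using hμ _ hmem
  · by_contra! h0
    exact hμ0 (PiLp.ext h0)
  · have hmem : WithLp.toLp 2 (fun _ => ∑ i, μ i) ∈ intersectingShifts hK :=
      ⟨a - ∑ i, μ i, fun j => by simpa using (hK j).1⟩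
    have := hμ _ hmem
    simp only [PiLp.inner_apply, ← sum_inner] at this
    exact real_inner_self_nonpos.mp this

theorem SeparableFam.intersectingShifts_ne_top [DecidableEq ι] (hK : ∀ i, IsConvexCone a (K i))
    (h : SeparableFam a K) : intersectingShifts hK ≠ ⊤ := by
  obtain ⟨i, c, hc, hKi, hmeet⟩ := h
  intro htop
  obtain ⟨x, hx⟩ : PiLp.single 2 i c ∈ intersectingShifts hK := htop ▸ Submodule.mem_top
  have hle : ⟪c, x + c - a⟫ ≤ 0 := hKi _ (by simpa using hx i)
  have hge : 0 ≤ ⟪c, x - a⟫ := hmeet x fun j hj => by simpa [hj] using hx j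
  have hc2 : 0 < ⟪c, c⟫ := real_inner_self_pos.mpr hc
  rw [add_sub_right_comm, inner_add_right] at hle
  linarith

end Shifts

theorem separableFam_of_mem_polarCone {E ι : Type*} [NormedAddCommGroup E]
    [InnerProductSpace ℝ E] [Fintype ι] {a : E} {K : ι → Set E} (lam : ι → E)
    (hpol : ∀ i, lam i ∈ polarCone a (K i)) (hne : ∃ i, lam i ≠ 0) (hsum : ∑ i, lam i = 0) :
    SeparableFam a K := by
  classical
  obtain ⟨i, hi⟩ := hne
  refine ⟨i, lam i, hi, hpol i, fun x hx => ?_⟩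
  have hzero : ∑ j, ⟪lam j, x - a⟫ = 0 := by rw [← sum_inner, hsum, inner_zero_left]
  have hrest : ∑ j ∈ Finset.univ.erase i, ⟪lam j, x - a⟫ ≤ 0 :=
    Finset.sum_nonpos fun j hj => hpol j x (hx j (Finset.ne_of_mem_erase hj))
  rw [← Finset.add_sum_erase _ _ (Finset.mem_univ i)] at hzero
  linarith

/-- A family of convex cones `K₀, …, K_s` with a common vertex `a` is
separable if and only if there exist vectors `λᵢ ∈ Kᵢ°`, not all zero,
summing to zero. -/
theorem stmt12 (d s : ℕ) (a : Euc d) (K : Fin (s + 1) → Set (Euc d))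
    (hK : ∀ i, IsConvexCone a (K i)) :
    SeparableFam a K ↔
      ∃ lam : Fin (s + 1) → Euc d, (∀ i, lam i ∈ polarCone a (K i)) ∧
        (∃ i, lam i ≠ 0) ∧ ∑ i, lam i = 0 :=
  ⟨fun h => exists_mem_polarCone_of_intersectingShifts_ne_top hK (h.intersectingShifts_ne_top hK),
    fun ⟨lam, hpol, hne, hsum⟩ => separableFam_of_mem_polarCone lam hpol hne hsum⟩
end
end

section
/- Let s ∈ ℕ and let L₁, …, L_s be linear subspaces of ℝᵈ with L₁ + ⋯ + L_s = ℝᵈ. For each i let L_i^Δ denote the sum of all the subspaces L₁, …, L_s except L_i. Fix a ∈ ℝᵈ, and for each i let K_i ⊆ a + L_i be a convex cone with vertex a. Define N_i := convexHull( K_i ∪ (a + L_i^Δ) ) for each i. Then each N_i is a convex cone with vertex a, and the family {N₁, …, N_s} is not separable in ℝᵈ. -/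
open scoped RealInnerProductSpace
open Asymptotics Topology

noncomputable section

/-!
The cone property is stable under convex hulls: the homothety at `a` with ratio `α ≥ 0` is affine,
so it maps `convexHull (Kᵢ ∪ (a + Lᵢ^Δ))` onto the hull of the image, which stays inside the same
generating set. For non-separability, suppose `c ≠ 0` separates `Nᵢ` from `⋂_{j ≠ i} N_j`. Every
`a + v` with `v ∈ Lⱼ`, `j ≠ i`, lies in `Nᵢ`, and every `a + v` with `v ∈ Lᵢ` lies in all `N_j`,
`j ≠ i`; since these sets are symmetric about `a`, `c` is orthogonal to every `Lⱼ`, hence to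
`L₁ + ⋯ + L_s = ℝᵈ`, so `c = 0`.
-/

section

variable {E : Type*} [NormedAddCommGroup E] [InnerProductSpace ℝ E] {a : E}

theorem isConvexCone_convexHull_of_homothety_mem {S : Set E} (ha : a ∈ S)
    (hS : ∀ x ∈ S, ∀ α : ℝ, 0 ≤ α → a + α • (x - a) ∈ S) :
    IsConvexCone a (convexHull ℝ S) := by
  refine ⟨subset_convexHull ℝ S ha, fun x hx α hα => ?_, convex_convexHull ℝ S⟩
  have hmaps : AffineMap.homothety a α '' S ⊆ S := by
    rintro _ ⟨y, hy, rfl⟩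
    simpa [AffineMap.homothety_apply, add_comm] using hS y hy α hα
  have hx' : AffineMap.homothety a α x ∈ AffineMap.homothety a α '' convexHull ℝ S :=
    ⟨x, hx, rfl⟩
  rw [AffineMap.image_convexHull] at hx'
  simpa [AffineMap.homothety_apply, add_comm] using convexHull_mono hmaps hx'

theorem IsConvexCone.convexHull_union_vadd_submodule {K : Set E} (hK : IsConvexCone a K)
    (V : Submodule ℝ E) :
    IsConvexCone a (convexHull ℝ (K ∪ (fun v => a + v) '' (V : Set E))) := by
  refine isConvexCone_convexHull_of_homothety_mem (Or.inl hK.1) ?_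
  rintro x (hx | ⟨v, hv, rfl⟩) α hα
  · exact Or.inl (hK.2.1 x hx α hα)
  · exact Or.inr ⟨α • v, V.smul_mem α hv, by simp⟩

theorem Submodule.inner_eq_zero_of_forall_inner_nonneg {V : Submodule ℝ E} {c : E}
    (h : ∀ v ∈ V, 0 ≤ ⟪c, v⟫) {v : E} (hv : v ∈ V) : ⟪c, v⟫ = 0 := by
  have hneg := h (-v) (V.neg_mem hv)
  rw [inner_neg_right] at hneg
  linarith [h v hv]

theorem eq_zero_of_forall_inner_eq_zero_of_iSup_eq_top {ι : Type*} {L : ι → Submodule ℝ E}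
    (hL : ⨆ i, L i = ⊤) {c : E} (hc : ∀ i, ∀ v ∈ L i, ⟪c, v⟫ = 0) : c = 0 := by
  have hc' : c ∈ ⨅ i, (L i)ᗮ :=
    Submodule.mem_iInf _ |>.mpr fun i => (Submodule.mem_orthogonal' _ c).mpr (hc i)
  rwa [Submodule.iInf_orthogonal, hL, Submodule.top_orthogonal_eq_bot,
    Submodule.mem_bot] at hc'

theorem not_separableFam_of_vadd_iSup_ne_subset {ι : Type*} {L : ι → Submodule ℝ E}
    (hL : ⨆ i, L i = ⊤) {N : ι → Set E}
    (hN : ∀ i, (fun v => a + v) '' ((⨆ j, ⨆ (_ : j ≠ i), L j : Submodule ℝ E) : Set E) ⊆ N i) :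
    ¬ SeparableFam a N := by
  rintro ⟨i, c, hc, hNi, hN_ne⟩
  have mem_N {k j : ι} (hjk : j ≠ k) {v : E} (hv : v ∈ L j) : a + v ∈ N k :=
    hN k ⟨v, (le_iSup₂ (f := fun m (_ : m ≠ k) => L m) j hjk) hv, rfl⟩
  refine hc (eq_zero_of_forall_inner_eq_zero_of_iSup_eq_top hL fun j v hv => ?_)
  by_cases hji : j = i
  · subst hji
    refine Submodule.inner_eq_zero_of_forall_inner_nonneg (fun w hw => ?_) hv
    simpa using hN_ne (a + w) fun k hk => mem_N (Ne.symm hk) hw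
  · suffices ⟪-c, v⟫ = 0 by rwa [inner_neg_left, neg_eq_zero] at this
    refine Submodule.inner_eq_zero_of_forall_inner_nonneg (fun w hw => ?_) hv
    simpa using hNi (a + w) (mem_N hji hw)

end

theorem stmt13_general (d s : ℕ) (a : Euc d)
    (L : Fin s → Submodule ℝ (Euc d)) (hL : (⨆ i, L i) = ⊤)
    (K : Fin s → Set (Euc d)) (hK : ∀ i, IsConvexCone a (K i))
    (N : Fin s → Set (Euc d))
    (hN : ∀ i, N i = convexHull ℝ
      (K i ∪ (fun v => a + v) ''
        ((⨆ j, ⨆ (_ : j ≠ i), L j : Submodule ℝ (Euc d)) : Set (Euc d)))) :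
    (∀ i, IsConvexCone a (N i)) ∧ ¬ SeparableFam a N := by
  refine ⟨fun i => hN i ▸ (hK i).convexHull_union_vadd_submodule _, ?_⟩
  refine not_separableFam_of_vadd_iSup_ne_subset hL fun i => ?_
  rw [hN i]
  exact Set.subset_union_right.trans (subset_convexHull ℝ _)

/-- If `L₁ + ⋯ + L_s = ℝᵈ`, `Kᵢ ⊆ a + Lᵢ` are convex cones with vertex `a`,
and `Nᵢ` is the convex hull of `Kᵢ ∪ (a + Lᵢ^Δ)` where `Lᵢ^Δ` is the sum of
all the subspaces except `Lᵢ`, then each `Nᵢ` is a convex cone with vertex `a`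
and the family `{N₁, …, N_s}` is not separable. -/
theorem stmt13 (d s : ℕ) (hs : 0 < s) (a : Euc d)
    (L : Fin s → Submodule ℝ (Euc d)) (hL : (⨆ i, L i) = ⊤)
    (K : Fin s → Set (Euc d)) (hK : ∀ i, IsConvexCone a (K i))
    (hKL : ∀ i, K i ⊆ (fun v => a + v) '' (L i : Set (Euc d)))
    (N : Fin s → Set (Euc d))
    (hN : ∀ i, N i = convexHull ℝ
      (K i ∪ (fun v => a + v) ''
        ((⨆ j, ⨆ (_ : j ≠ i), L j : Submodule ℝ (Euc d)) : Set (Euc d)))) :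
    (∀ i, IsConvexCone a (N i)) ∧ ¬ SeparableFam a N :=
  stmt13_general d s a L hL K hK N hN
end
end

section
/- Let f : ℝᵈ → ℝ be continuously differentiable and let a ∈ ℝᵈ be a point with ∇f(a) ≠ 0. Define Ω := {x ∈ ℝᵈ : f(x) ≤ f(a)}, Ω₀ := {a} ∪ {x ∈ ℝᵈ : f(x) < f(a)}, and the half-space K := {x ∈ ℝᵈ : ⟨∇f(a), x − a⟩ ≤ 0}. Then K is a tent of Ω at a and K is a tent of Ω₀ at a. -/
open scoped RealInnerProductSpace
open Asymptotics Topology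

noncomputable section

/-!
Pick a direction `v` with `f' v > 0`. Strict differentiability at `a` means that, uniformly for
`x` near `a`, `f` decreases along `-v` at rate at least `f' v / 2`. So pushing `x` back along `-v`
by `c x = 2 (|r x| + ‖x - a‖²) / f' v`, where `r` is the first-order Taylor remainder at `a`, gives
`f (x - c x • v) ≤ f a + f' (x - a) - ‖x - a‖²`. Since `c x = o(‖x - a‖)`, this correction is
admissible for a tent, and the right-hand side is `≤ f a` on the half-space `f' (x - a) ≤ 0`,
strictly unless `x = a`.
-/

open Filter

section Descent

variable {E : Type*} [NormedAddCommGroup E] [NormedSpace ℝ E] {f : E → ℝ} {f' : E →L[ℝ] ℝ}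
  {a v : E}

theorem ContinuousLinearMap.exists_apply_pos {ℓ : E →L[ℝ] ℝ} (hℓ : ℓ ≠ 0) : ∃ v, 0 < ℓ v := by
  obtain ⟨v, hv⟩ := DFunLike.ne_iff.1 hℓ
  rcases lt_or_gt_of_ne hv with h | h
  · exact ⟨-v, by simpa using h⟩
  · exact ⟨v, by simpa using h⟩

theorem HasStrictFDerivAt.eventually_le_sub_smul (hf : HasStrictFDerivAt f f' a)
    (hv : 0 < f' v) :
    ∀ᶠ p : E × ℝ in 𝓝 (a, 0), 0 ≤ p.2 → f (p.1 - p.2 • v) ≤ f p.1 - p.2 * f' v / 2 := by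
  have hv0 : v ≠ 0 := by rintro rfl; simp at hv
  have hbound := hf.isLittleO.def (c := f' v / (2 * ‖v‖)) (by positivity)
  have htend : Tendsto (fun p : E × ℝ => (p.1 - p.2 • v, p.1)) (𝓝 (a, 0)) (𝓝 (a, a)) := by
    simpa using ((continuous_fst.sub (continuous_snd.smul continuous_const)).prodMk
      continuous_fst).tendsto (a, (0 : ℝ))
  filter_upwards [htend.eventually hbound] with ⟨x, s⟩ hx hs
  have hnorm : f' v / (2 * ‖v‖) * ‖-(s • v)‖ = s * f' v / 2 := by
    rw [norm_neg, norm_smul, Real.norm_of_nonneg hs]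
    field_simp
  simp only [sub_sub_cancel_left, map_neg, map_smul, smul_eq_mul, sub_neg_eq_add, hnorm] at hx hs ⊢
  linarith [(abs_le.mp (Real.norm_eq_abs _ ▸ hx)).2]

theorem HasStrictFDerivAt.exists_descent_map (hf : HasStrictFDerivAt f f' a) (hv : 0 < f' v) :
    ∃ ψ : E → E, ψ a = a ∧ (fun x => ψ x - x) =o[𝓝 a] (fun x => x - a) ∧
      ∀ᶠ x in 𝓝 a, f (ψ x) ≤ f a + f' (x - a) - ‖x - a‖ ^ 2 := by
  set c : E → ℝ := fun x => 2 / f' v * (|f x - f a - f' (x - a)| + ‖x - a‖ ^ 2)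
  have hc : c =o[𝓝 a] (fun x => x - a) := by
    have := (hf.hasFDerivAt.isLittleO.norm_left.add (isLittleO_pow_sub_sub a one_lt_two))
    simpa only [Real.norm_eq_abs] using this.const_mul_left (2 / f' v)
  refine ⟨fun x => x - c x • v, by simp [c], ?_, ?_⟩
  · refine IsBigO.trans_isLittleO (isBigO_of_le' (c := ‖v‖) _ fun x => ?_) hc
    rw [sub_sub_cancel_left, norm_neg, norm_smul, mul_comm]
  · have htend : Tendsto (fun x => (x, c x)) (𝓝 a) (𝓝 (a, 0)) :=
      tendsto_id.prodMk_nhds (hc.trans_tendsto (tendsto_sub_nhds_zero_iff.2 tendsto_id))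
    filter_upwards [htend.eventually (hf.eventually_le_sub_smul hv)] with x hx
    have hcx : c x * f' v / 2 = |f x - f a - f' (x - a)| + ‖x - a‖ ^ 2 := by
      simp only [c]
      field_simp
    have := hx (by positivity)
    linarith [le_abs_self (f x - f a - f' (x - a))]

end Descent

section Tent

variable {E : Type*} [NormedAddCommGroup E] [InnerProductSpace ℝ E]

theorem isConvexCone_setOf_apply_sub_nonpos (ℓ : E →L[ℝ] ℝ) (a : E) :
    IsConvexCone a {x | ℓ (x - a) ≤ 0} := by
  refine ⟨by simp, fun x hx α hα => ?_, ?_⟩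
  · simpa using mul_nonpos_of_nonneg_of_nonpos hα hx
  · simpa only [map_sub, sub_nonpos, ContinuousLinearMap.coe_coe] using
      convex_halfSpace_le ℓ.toLinearMap.isLinear (ℓ a)

theorem isTent_of_eventually {Ω Q : Set E} {a : E} {ψ : E → E} (hQ : IsConvexCone a Q)
    (hψ : (fun x => ψ x - x) =o[𝓝 a] (fun x => x - a)) (hΩ : ∀ᶠ x in 𝓝 a, x ∈ Q → ψ x ∈ Ω) :
    IsTent Ω a Q := by
  obtain ⟨ε, hε, h⟩ := Metric.eventually_nhds_iff.1 hΩ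
  exact ⟨hQ, ψ, hψ, ε, hε, fun x hx hxa => h (by rwa [dist_eq_norm]) hx⟩

theorem HasStrictFDerivAt.isTent_sublevel {f : E → ℝ} {f' : E →L[ℝ] ℝ} {a : E}
    (hf : HasStrictFDerivAt f f' a) (hf' : f' ≠ 0) :
    IsTent {x | f x ≤ f a} a {x | f' (x - a) ≤ 0} ∧
      IsTent (insert a {x | f x < f a}) a {x | f' (x - a) ≤ 0} := by
  obtain ⟨v, hv⟩ := f'.exists_apply_pos hf'
  obtain ⟨ψ, hψa, hψ, hdesc⟩ := hf.exists_descent_map hv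
  have hK := isConvexCone_setOf_apply_sub_nonpos f' a
  refine ⟨isTent_of_eventually hK hψ ?_, isTent_of_eventually hK hψ ?_⟩
  · filter_upwards [hdesc] with x hx (hxK : f' (x - a) ≤ 0)
    show f (ψ x) ≤ f a
    linarith [sq_nonneg ‖x - a‖]
  · filter_upwards [hdesc] with x hx (hxK : f' (x - a) ≤ 0)
    rcases eq_or_ne x a with rfl | hne
    · simp [hψa]
    · have : 0 < ‖x - a‖ ^ 2 := by positivity [sub_ne_zero.2 hne]
      exact Or.inr (show f (ψ x) < f a by linarith)

end Tent

/-- The half-space determined by the gradient of `f` at a non-critical point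
`a` is a tent at `a` of the sublevel set `{f ≤ f a}` and of the set
`{a} ∪ {f < f a}`. -/
theorem stmt14 (d : ℕ) (f : Euc d → ℝ) (hf : ContDiff ℝ 1 f) (a : Euc d)
    (hgrad : gradient f a ≠ 0) :
    IsTent {x | f x ≤ f a} a {x | ⟪gradient f a, x - a⟫ ≤ 0} ∧
    IsTent (insert a {x | f x < f a}) a {x | ⟪gradient f a, x - a⟫ ≤ 0} := by
  have hK : {x | ⟪gradient f a, x - a⟫ ≤ 0} = {x | fderiv ℝ f a (x - a) ≤ 0} := by
    simp only [gradient, InnerProductSpace.toDual_symm_apply]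
  rw [hK]
  refine (hf.contDiffAt.hasStrictFDerivAt one_ne_zero).isTent_sublevel fun h => hgrad ?_
  simp [gradient, h]
end
end

section
/- Let Ω ⊆ ℝᵈ be a convex set and a ∈ Ω. Let K be the supporting cone of Ω at a, i.e., K := closure( { a + α(x − a) : α ≥ 0, x ∈ Ω } ). Then K is a local tent of Ω at a. -/
open scoped RealInnerProductSpace
open Asymptotics Topology

noncomputable section

/-!
Every point of the supporting cone `K` near `a` is within `o(‖p - a‖)` of `Ω`, which makes `K`
itself a tent, hence a local tent. For a single unit direction `w ∈ K` this holds because `w`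
is approximated by some `q = a + α (x - a)` with `x ∈ Ω`, and the initial piece of the ray from
`a` through `q` lies in `Ω` by convexity. The estimate is uniform in `w` by compactness of the
unit sphere, and the cone property turns it into an estimate at every small `p ∈ K`.
-/

open Metric Filter Set

section NormedSpace

variable {E : Type*} [NormedAddCommGroup E] [NormedSpace ℝ E] {Ω : Set E} {a : E}

def radialCone (Ω : Set E) (a : E) : Set E :=
  {y | ∃ (α : ℝ) (x : E), 0 ≤ α ∧ x ∈ Ω ∧ y = a + α • (x - a)}

lemma mem_radialCone_of_mem (ha : a ∈ Ω) : a ∈ radialCone Ω a :=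
  ⟨0, a, le_rfl, ha, by simp⟩

lemma add_smul_sub_mem_radialCone {p : E} {α : ℝ} (hp : p ∈ radialCone Ω a) (hα : 0 ≤ α) :
    a + α • (p - a) ∈ radialCone Ω a := by
  obtain ⟨β, x, hβ, hx, rfl⟩ := hp
  exact ⟨α * β, x, mul_nonneg hα hβ, hx, by module⟩

lemma add_smul_sub_mem_closure_radialCone {p : E} {α : ℝ} (hp : p ∈ closure (radialCone Ω a))
    (hα : 0 ≤ α) : a + α • (p - a) ∈ closure (radialCone Ω a) :=
  map_mem_closure (f := fun q => a + α • (q - a)) (by fun_prop) hp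
    fun _ hq => add_smul_sub_mem_radialCone hq hα

lemma convex_radialCone (hΩ : Convex ℝ Ω) : Convex ℝ (radialCone Ω a) := by
  rintro _ ⟨α, x, hα, hx, rfl⟩ _ ⟨β, y, hβ, hy, rfl⟩ s t hs ht hst
  have hsα : 0 ≤ s * α := mul_nonneg hs hα
  have htβ : 0 ≤ t * β := mul_nonneg ht hβ
  have combo : s • (a + α • (x - a)) + t • (a + β • (y - a))
      = a + (s * α) • (x - a) + (t * β) • (y - a) := by
    linear_combination (norm := module) hst • a
  rcases (add_nonneg hsα htβ).eq_or_lt with hγ | hγ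
  · obtain ⟨hsα0, htβ0⟩ := (add_eq_zero_iff_of_nonneg hsα htβ).1 hγ.symm
    refine ⟨0, x, le_rfl, hx, ?_⟩
    rw [combo, hsα0, htβ0]
    simp
  · set γ := s * α + t * β
    refine ⟨γ, (s * α / γ) • x + (t * β / γ) • y, hγ.le,
      hΩ hx hy (div_nonneg hsα hγ.le) (div_nonneg htβ hγ.le)
      (by rw [← add_div, div_self hγ.ne']), ?_⟩
    rw [combo]
    match_scalars <;> field_simp
    ring

lemma eventually_add_smul_sub_mem_of_mem_radialCone (hΩ : Convex ℝ Ω) (ha : a ∈ Ω) {q : E}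
    (hq : q ∈ radialCone Ω a) : ∀ᶠ s in 𝓝 (0 : ℝ), 0 ≤ s → a + s • (q - a) ∈ Ω := by
  obtain ⟨α, x, hα, hx, rfl⟩ := hq
  have hαpos : 0 < α + 1 := by linarith
  filter_upwards [Iio_mem_nhds (inv_pos.2 hαpos)] with s hs hs0
  have hsα : s * α ≤ 1 := by
    have := mul_lt_mul_of_pos_right hs hαpos
    rw [inv_mul_cancel₀ hαpos.ne'] at this
    nlinarith
  have hmem := hΩ ha hx (sub_nonneg.2 hsα) (mul_nonneg hs0 hα) (by ring)
  convert hmem using 1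
  module

lemma eventually_forall_sphere_infDist_le [ProperSpace E] (hΩ : Convex ℝ Ω) (ha : a ∈ Ω)
    {ε : ℝ} (hε : 0 < ε) :
    ∀ᶠ r in 𝓝 (0 : ℝ), ∀ w ∈ closure (radialCone Ω a) ∩ sphere a 1, 0 ≤ r →
      infDist (a + r • (w - a)) Ω ≤ ε * r := by
  refine ((isCompact_sphere a 1).inter_left isClosed_closure)
    |>.eventually_forall_of_forall_eventually ?_
  rintro w ⟨hwK, -⟩
  obtain ⟨q, hq, hwq⟩ := mem_closure_iff.1 hwK ε hε
  filter_upwards [(eventually_add_smul_sub_mem_of_mem_radialCone hΩ ha hq).prod_nhds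
    (isOpen_ball.mem_nhds (mem_ball.2 hwq))] with ⟨r, w'⟩ ⟨hr, hw'⟩ hr0
  calc infDist (a + r • (w' - a)) Ω
      ≤ dist (a + r • (w' - a)) (a + r • (q - a)) := infDist_le_dist_of_mem (hr hr0)
    _ = r * dist w' q := by
      rw [dist_add_left, dist_smul₀, dist_sub_right, Real.norm_of_nonneg hr0]
    _ ≤ ε * r := by rw [mul_comm]; exact mul_le_mul_of_nonneg_right (mem_ball.1 hw').le hr0

theorem isLittleO_infDist_closure_radialCone [ProperSpace E] (hΩ : Convex ℝ Ω) (ha : a ∈ Ω) :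
    (fun p => infDist p Ω) =o[𝓝[closure (radialCone Ω a)] a] (fun p => p - a) := by
  rw [isLittleO_iff]
  intro ε hε
  obtain ⟨δ, hδ, hδr⟩ :=
    Metric.eventually_nhds_iff.1 (eventually_forall_sphere_infDist_le hΩ ha hε)
  rw [eventually_nhdsWithin_iff, Metric.eventually_nhds_iff]
  refine ⟨δ, hδ, fun p hpδ hpK => ?_⟩
  rcases eq_or_ne p a with rfl | hpa
  · simp [infDist_zero_of_mem ha]
  set r := ‖p - a‖
  have hr : 0 < r := norm_sub_pos_iff.2 hpa
  have hp : p = a + r • ((a + r⁻¹ • (p - a)) - a) := by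
    rw [add_sub_cancel_left, smul_smul, mul_inv_cancel₀ hr.ne', one_smul, add_sub_cancel]
  have hw : a + r⁻¹ • (p - a) ∈ closure (radialCone Ω a) ∩ sphere a 1 := by
    refine ⟨add_smul_sub_mem_closure_radialCone hpK (inv_nonneg.2 hr.le), ?_⟩
    rw [mem_sphere, dist_eq_norm, add_sub_cancel_left, norm_smul, Real.norm_of_nonneg
      (inv_nonneg.2 hr.le), inv_mul_cancel₀ hr.ne']
  have hrδ : dist r 0 < δ := by
    rw [Real.dist_0_eq_abs, abs_of_pos hr]
    rwa [dist_eq_norm] at hpδ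
  have hbound := hδr hrδ _ hw hr.le
  rw [← hp] at hbound
  rwa [Real.norm_of_nonneg infDist_nonneg]

end NormedSpace

section InnerProductSpace

variable {E : Type*} [NormedAddCommGroup E] [InnerProductSpace ℝ E] {Ω : Set E} {a : E}

lemma isConvexCone_closure_radialCone (hΩ : Convex ℝ Ω) (ha : a ∈ Ω) :
    IsConvexCone a (closure (radialCone Ω a)) :=
  ⟨subset_closure (mem_radialCone_of_mem ha), fun _ hp _ hα =>
    add_smul_sub_mem_closure_radialCone hp hα, (convex_radialCone hΩ).closure⟩

lemma isTent_of_isLittleO_infDist {Q : Set E} (hQ : IsConvexCone a Q) (ha : a ∈ Ω)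
    (h : (fun p => infDist p Ω) =o[𝓝[Q] a] (fun p => p - a)) : IsTent Ω a Q := by
  classical
  -- an `‖p - a‖ ^ 2` margin lets us pick points of `Ω` even where `infDist` is not attained
  have near : ∀ p, ∃ ω ∈ Ω, dist p ω ≤ infDist p Ω + ‖p - a‖ ^ 2 := by
    intro p
    rcases eq_or_ne p a with rfl | hpa
    · exact ⟨p, ha, by simp [infDist_nonneg]⟩
    · obtain ⟨ω, hω, hdist⟩ := (infDist_lt_iff ⟨a, ha⟩).1
        (lt_add_of_pos_right (infDist p Ω) (pow_pos (norm_sub_pos_iff.2 hpa) 2))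
      exact ⟨ω, hω, hdist.le⟩
  choose ω hωΩ hω using near
  refine ⟨hQ, Q.piecewise ω id, ?_, 1, one_pos, fun p hp _ => by simpa [hp] using hωΩ p⟩
  rw [← nhdsWithin_univ, ← Q.union_compl_self, nhdsWithin_union]
  refine IsLittleO.sup ?_ ?_
  · refine IsBigO.trans_isLittleO (IsBigO.of_bound' ?_)
      (h.add ((isLittleO_pow_sub_sub a one_lt_two).mono nhdsWithin_le_nhds))
    filter_upwards [self_mem_nhdsWithin] with p hp
    rw [piecewise_eq_of_mem _ _ _ hp, ← dist_eq_norm, dist_comm,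
      Real.norm_of_nonneg (add_nonneg infDist_nonneg (sq_nonneg _))]
    exact hω p
  · refine (isLittleO_zero _ _).congr' ?_ EventuallyEq.rfl
    filter_upwards [self_mem_nhdsWithin] with p hp
    simp [piecewise_eq_of_notMem _ _ _ hp]

lemma IsTent.isLocalTent {Q : Set E} (h : IsTent Ω a Q) : IsLocalTent Ω a Q :=
  ⟨h.1, fun _ hx => ⟨Q, subset_rfl, h, hx, rfl⟩⟩

end InnerProductSpace

/-- The supporting cone of a convex set `Ω` at `a ∈ Ω` is a local tent of `Ω`
at `a`. -/
theorem stmt15 (d : ℕ) (Ω : Set (Euc d)) (hΩ : Convex ℝ Ω) (a : Euc d)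
    (ha : a ∈ Ω) :
    IsLocalTent Ω a
      (closure {y | ∃ (α : ℝ) (x : Euc d), 0 ≤ α ∧ x ∈ Ω ∧ y = a + α • (x - a)}) :=
  (isTent_of_isLittleO_infDist (isConvexCone_closure_radialCone hΩ ha) ha
    (isLittleO_infDist_closure_radialCone hΩ ha)).isLocalTent
end
end

section
/- Let n, m, T be positive integers and set P := n(T+1) + mT, identifying ℝ^P with the product (ℝⁿ)^{T+1} × (ℝᵐ)^{T} with coordinate projections π_t^x : ℝ^P → ℝⁿ (t = 0,…,T) and π_t^u : ℝ^P → ℝᵐ (t = 0,…,T−1). Fix points x*_t ∈ ℝⁿ (t = 0,…,T) and u*_t ∈ ℝᵐ (t = 0,…,T−1), and let π* := (x*_0,…,x*_T,u*_0,…,u*_{T−1}) ∈ ℝ^P. For each t let Q_t^x ⊆ ℝⁿ be a convex cone with vertex x*_t and let Q_t^u ⊆ ℝᵐ be a convex cone with vertex u*_t. Define the lifted sets \hat{Q}_t^x := {z ∈ ℝ^P : π_t^x(z) ∈ Q_t^x} and \hat{Q}_t^u := {z ∈ ℝ^P : π_t^u(z) ∈ Q_t^u}. Then each lifted set is a convex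 cone with vertex π*, and the family {\hat{Q}_t^x}_{t=0}^{T} ∪ {\hat{Q}_t^u}_{t=0}^{T−1} of convex cones in ℝ^P is not separable. -/
open scoped RealInnerProductSpace
open Asymptotics Topology

noncomputable section

/-- The ambient space `ℝ^P` with `P = n(T+1) + mT`, identified with the
product `(ℝⁿ)^(T+1) × (ℝᵐ)^T`. -/
abbrev Amb (n m T : ℕ) : Type :=
  EuclideanSpace ℝ ((Fin (T + 1) × Fin n) ⊕ (Fin T × Fin m))

/-- The coordinate projection `π_t^x : ℝ^P → ℝⁿ`. -/
def projX {n m T : ℕ} (t : Fin (T + 1)) (z : Amb n m T) : Euc n :=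
  (EuclideanSpace.equiv (Fin n) ℝ).symm fun j =>
    EuclideanSpace.equiv ((Fin (T + 1) × Fin n) ⊕ (Fin T × Fin m)) ℝ z (Sum.inl (t, j))

/-- The coordinate projection `π_t^u : ℝ^P → ℝᵐ`. -/
def projU {n m T : ℕ} (t : Fin T) (z : Amb n m T) : Euc m :=
  (EuclideanSpace.equiv (Fin m) ℝ).symm fun j =>
    EuclideanSpace.equiv ((Fin (T + 1) × Fin n) ⊕ (Fin T × Fin m)) ℝ z (Sum.inr (t, j))

/-- The point `π* = (x*_0, …, x*_T, u*_0, …, u*_{T-1}) ∈ ℝ^P`. -/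
def piStar {n m T : ℕ} (xs : Fin (T + 1) → Euc n) (us : Fin T → Euc m) :
    Amb n m T :=
  (EuclideanSpace.equiv ((Fin (T + 1) × Fin n) ⊕ (Fin T × Fin m)) ℝ).symm
    (Sum.elim (fun tj => EuclideanSpace.equiv (Fin n) ℝ (xs tj.1) tj.2)
      (fun tj => EuclideanSpace.equiv (Fin m) ℝ (us tj.1) tj.2))

section Aux

variable {n m T : ℕ}

theorem projX_add_single (t : Fin (T + 1)) (z : Amb n m T)
    (k : (Fin (T + 1) × Fin n) ⊕ (Fin T × Fin m)) (r : ℝ)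
    (h : ∀ j, k ≠ Sum.inl (t, j)) :
    projX t (z + EuclideanSpace.single k r) = projX t z := by
  ext j
  show z (Sum.inl (t, j)) + EuclideanSpace.single k r (Sum.inl (t, j)) = z (Sum.inl (t, j))
  rw [EuclideanSpace.single_apply, if_neg (fun hh => h j hh.symm)]
  ring

theorem projU_add_single (t : Fin T) (z : Amb n m T)
    (k : (Fin (T + 1) × Fin n) ⊕ (Fin T × Fin m)) (r : ℝ)
    (h : ∀ j, k ≠ Sum.inr (t, j)) :
    projU t (z + EuclideanSpace.single k r) = projU t z := by
  ext j
  show z (Sum.inr (t, j)) + EuclideanSpace.single k r (Sum.inr (t, j)) = z (Sum.inr (t, j))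
  rw [EuclideanSpace.single_apply, if_neg (fun hh => h j hh.symm)]
  ring

theorem amb_inner_single (c : Amb n m T)
    (k : (Fin (T + 1) × Fin n) ⊕ (Fin T × Fin m)) (r : ℝ) :
    ⟪c, EuclideanSpace.single k r⟫ = r * c k := by
  rw [EuclideanSpace.inner_single_right]
  simp [mul_comm]

end Aux

/-- The lifts of cones `Q_t^x ⊆ ℝⁿ` and `Q_t^u ⊆ ℝᵐ` to `ℝ^P` are convex
cones with vertex `π*`, and this family of lifted cones is not separable. -/
theorem stmt19 (n m T : ℕ) (hn : 0 < n) (hm : 0 < m) (hT : 0 < T)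
    (xs : Fin (T + 1) → Euc n) (us : Fin T → Euc m)
    (Qx : Fin (T + 1) → Set (Euc n)) (Qu : Fin T → Set (Euc m))
    (hQx : ∀ t, IsConvexCone (xs t) (Qx t))
    (hQu : ∀ t, IsConvexCone (us t) (Qu t)) :
    (∀ t : Fin (T + 1),
        IsConvexCone (piStar xs us) {z : Amb n m T | projX t z ∈ Qx t}) ∧
    (∀ t : Fin T,
        IsConvexCone (piStar xs us) {z : Amb n m T | projU t z ∈ Qu t}) ∧
    ¬ SeparableFam (piStar xs us)
        (Sum.elim
          (fun t : Fin (T + 1) => {z : Amb n m T | projX t z ∈ Qx t})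
          (fun t : Fin T => {z : Amb n m T | projU t z ∈ Qu t})) := by
  classical
  refine ⟨?_, ?_, ?_⟩
  · intro t
    exact ⟨(hQx t).1, fun z hz α hα => (hQx t).2.1 _ hz α hα,
      fun z hz w hw r s hr hs hrs => (hQx t).2.2 hz hw hr hs hrs⟩
  · intro t
    exact ⟨(hQu t).1, fun z hz α hα => (hQu t).2.1 _ hz α hα,
      fun z hz w hw r s hr hs hrs => (hQu t).2.2 hz hw hr hs hrs⟩
  · rintro ⟨i, c, hc0, h1, h2⟩
    set a := piStar xs us with ha
    -- perturbing `a` along a coordinate outside the `s`-th x-block stays in the lifted cone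
    have hmemX : ∀ (s : Fin (T + 1)) (k) (r : ℝ), (∀ j, k ≠ Sum.inl (s, j)) →
        (a + EuclideanSpace.single k r) ∈ {z : Amb n m T | projX s z ∈ Qx s} := by
      intro s k r h
      show projX s (a + EuclideanSpace.single k r) ∈ Qx s
      rw [projX_add_single s a k r h]
      exact (hQx s).1
    have hmemU : ∀ (s : Fin T) (k) (r : ℝ), (∀ j, k ≠ Sum.inr (s, j)) →
        (a + EuclideanSpace.single k r) ∈ {z : Amb n m T | projU s z ∈ Qu s} := by
      intro s k r h
      show projU s (a + EuclideanSpace.single k r) ∈ Qu s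
      rw [projU_add_single s a k r h]
      exact (hQu s).1
    -- if the `k`-th coordinate direction lies (both ways) in `K i`, then `c k = 0`
    have hB : ∀ k, (∀ r : ℝ, (a + EuclideanSpace.single k r) ∈
        Sum.elim (fun t : Fin (T + 1) => {z : Amb n m T | projX t z ∈ Qx t})
          (fun t : Fin T => {z : Amb n m T | projU t z ∈ Qu t}) i) → c k = 0 := by
      intro k hk
      have h₁ := h1 _ (hk 1)
      have h₂ := h1 _ (hk (-1))
      rw [add_sub_cancel_left, amb_inner_single] at h₁ h₂
      nlinarith
    -- if it lies (both ways) in every `K j`, `j ≠ i`, then `c k = 0`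
    have hA : ∀ k, (∀ (r : ℝ) j, j ≠ i → (a + EuclideanSpace.single k r) ∈
        Sum.elim (fun t : Fin (T + 1) => {z : Amb n m T | projX t z ∈ Qx t})
          (fun t : Fin T => {z : Amb n m T | projU t z ∈ Qu t}) j) → c k = 0 := by
      intro k hk
      have h₁ := h2 _ (fun j hj => hk 1 j hj)
      have h₂ := h2 _ (fun j hj => hk (-1) j hj)
      rw [add_sub_cancel_left, amb_inner_single] at h₁ h₂
      nlinarith
    apply hc0
    ext k
    show c k = 0
    obtain ⟨t0, j0⟩ | ⟨t0, j0⟩ := k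
    · obtain ti | ti := i
      · by_cases hts : t0 = ti
        · subst hts
          refine hA _ fun r j hj => ?_
          obtain s | s := j
          · exact hmemX s _ r fun j' hh => hj (by
              injection hh with hh'
              injection hh' with e1 e2
              rw [e1])
          · exact hmemU s _ r fun j' hh => by simp at hh
        · exact hB _ fun r => hmemX ti _ r fun j' hh => hts (by
            injection hh with hh'
            exact congrArg Prod.fst hh')
      · exact hB _ fun r => hmemU ti _ r fun j' hh => by simp at hh
    · obtain ti | ti := i
      · exact hB _ fun r => hmemX ti _ r fun j' hh => by simp at hh
      · by_cases hts : t0 = ti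
        · subst hts
          refine hA _ fun r j hj => ?_
          obtain s | s := j
          · exact hmemX s _ r fun j' hh => by simp at hh
          · exact hmemU s _ r fun j' hh => hj (by
              injection hh with hh'
              injection hh' with e1 e2
              rw [e1])
        · exact hB _ fun r => hmemU ti _ r fun j' hh => hts (by
            injection hh with hh'
            exact congrArg Prod.fst hh')
end
end
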